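/- arXiv:2208.08108 — 2 statements merged into one kernel-verified Lean document; each statement's English description precedes it below -/
import Mathlib

section
/- Let φ: ℝ → ℝ be convex with subgradient φ' and define the Bregman loss ρ(y,ξ) = φ(y) - φ(ξ) + φ'(ξ)(ξ - y). Then for any integrable real random variable Y with E[|φ(Y)|] < ∞ and mean μ = E[Y], and any ξ ∈ ℝ, E[ρ(Y,μ)] ≤ E[ρ(Y,ξ)]. If φ is strictly convex, equality holds only if ξ = μ. -/
/-!
Taking expectations, the Bregman loss is affine in `φ ∘ Y` and `Y`, so the expected loss at `ξ`
exceeds the expected loss at the mean `m = E[Y]` by exactly `ρ(m, ξ)`. This is nonnegative by the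
subgradient inequality, and for strictly convex `φ` it vanishes only at `ξ = m`.
-/

open MeasureTheory

def bregmanLoss (φ φ' : ℝ → ℝ) (y ξ : ℝ) : ℝ :=
  φ y - φ ξ + φ' ξ * (ξ - y)

variable {φ φ' : ℝ → ℝ}

theorem bregmanLoss_nonneg {ξ : ℝ} (hsub : ∀ z, φ ξ + φ' ξ * (z - ξ) ≤ φ z) (y : ℝ) :
    0 ≤ bregmanLoss φ φ' y ξ := by
  have := hsub y
  unfold bregmanLoss
  linarith

theorem eq_of_bregmanLoss_eq_zero (hstrict : StrictConvexOn ℝ Set.univ φ) {y ξ : ℝ}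
    (hsub : ∀ z, φ ξ + φ' ξ * (z - ξ) ≤ φ z) (hzero : bregmanLoss φ φ' y ξ = 0) : y = ξ := by
  by_contra hne
  -- At the midpoint, strict convexity puts `φ` strictly below the chord, which `hzero` makes
  -- coincide with the tangent line at `ξ`; the subgradient inequality puts `φ` above it.
  have hchord : φ ((1 / 2 : ℝ) • y + (1 / 2 : ℝ) • ξ) < (1 / 2 : ℝ) • φ y + (1 / 2 : ℝ) • φ ξ :=
    hstrict.2 (Set.mem_univ y) (Set.mem_univ ξ) hne (by norm_num) (by norm_num) (by norm_num)
  have htangent := hsub ((1 / 2 : ℝ) • y + (1 / 2 : ℝ) • ξ)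
  simp only [smul_eq_mul] at hchord htangent
  unfold bregmanLoss at hzero
  linarith

section Expectation

variable {Ω : Type*} [MeasurableSpace Ω] {μ : Measure Ω} [IsProbabilityMeasure μ] {Y : Ω → ℝ}

theorem integral_bregmanLoss (hYint : Integrable Y μ) (hφint : Integrable (fun ω => φ (Y ω)) μ)
    (ξ : ℝ) :
    ∫ ω, bregmanLoss φ φ' (Y ω) ξ ∂μ = (∫ ω, φ (Y ω) ∂μ) - φ ξ + φ' ξ * (ξ - ∫ ω, Y ω ∂μ) := by
  have hconst : Integrable (fun ω => φ (Y ω) - φ ξ) μ := hφint.sub (integrable_const _)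
  have hlin : Integrable (fun ω => φ' ξ * (ξ - Y ω)) μ :=
    ((integrable_const ξ).sub hYint).const_mul _
  unfold bregmanLoss
  rw [integral_add hconst hlin, integral_sub hφint (integrable_const _), integral_const_mul,
    integral_sub (integrable_const _) hYint, integral_const, integral_const]
  simp

theorem integral_bregmanLoss_eq_integral_bregmanLoss_mean_add (hYint : Integrable Y μ)
    (hφint : Integrable (fun ω => φ (Y ω)) μ) (ξ : ℝ) :
    ∫ ω, bregmanLoss φ φ' (Y ω) ξ ∂μ =
      ∫ ω, bregmanLoss φ φ' (Y ω) (∫ ω', Y ω' ∂μ) ∂μ + bregmanLoss φ φ' (∫ ω, Y ω ∂μ) ξ := by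
  rw [integral_bregmanLoss hYint hφint, integral_bregmanLoss hYint hφint, bregmanLoss]
  ring

end Expectation

theorem bregman_loss_consistent_for_mean_general
    {Ω : Type*} [MeasurableSpace Ω] (μ : Measure Ω) [IsProbabilityMeasure μ]
    (Y : Ω → ℝ) (hYint : Integrable Y μ)
    (φ φ' : ℝ → ℝ)
    (hsub : ∀ ξ z : ℝ, φ ξ + φ' ξ * (z - ξ) ≤ φ z)
    (hφint : Integrable (fun ω => φ (Y ω)) μ)
    (ξ : ℝ) :
    (∫ ω, (φ (Y ω) - φ (∫ ω', Y ω' ∂μ) + φ' (∫ ω', Y ω' ∂μ) * ((∫ ω', Y ω' ∂μ) - Y ω)) ∂μ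
        ≤ ∫ ω, (φ (Y ω) - φ ξ + φ' ξ * (ξ - Y ω)) ∂μ) ∧
      (StrictConvexOn ℝ Set.univ φ →
        (∫ ω, (φ (Y ω) - φ (∫ ω', Y ω' ∂μ) + φ' (∫ ω', Y ω' ∂μ) * ((∫ ω', Y ω' ∂μ) - Y ω)) ∂μ
          = ∫ ω, (φ (Y ω) - φ ξ + φ' ξ * (ξ - Y ω)) ∂μ) →
        ξ = ∫ ω, Y ω ∂μ) := by
  have hsplit := integral_bregmanLoss_eq_integral_bregmanLoss_mean_add (φ' := φ') hYint hφint ξ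
  simp only [bregmanLoss] at hsplit
  rw [hsplit]
  refine ⟨le_add_of_nonneg_right (bregmanLoss_nonneg (hsub ξ) _), fun hstrict heq => ?_⟩
  exact (eq_of_bregmanLoss_eq_zero hstrict (hsub ξ) (by rw [bregmanLoss]; linarith)).symm

/-- Bregman losses are consistent for the mean; strictly so if φ is strictly convex. -/
theorem bregman_loss_consistent_for_mean
    {Ω : Type*} [MeasurableSpace Ω] (μ : Measure Ω) [IsProbabilityMeasure μ]
    (Y : Ω → ℝ) (hY : Measurable Y) (hYint : Integrable Y μ)
    (φ φ' : ℝ → ℝ) (hconv : ConvexOn ℝ Set.univ φ)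
    (hsub : ∀ ξ z : ℝ, φ ξ + φ' ξ * (z - ξ) ≤ φ z)
    (hφint : Integrable (fun ω => φ (Y ω)) μ)
    (ξ : ℝ) :
    (∫ ω, (φ (Y ω) - φ (∫ ω', Y ω' ∂μ) + φ' (∫ ω', Y ω' ∂μ) * ((∫ ω', Y ω' ∂μ) - Y ω)) ∂μ
        ≤ ∫ ω, (φ (Y ω) - φ ξ + φ' ξ * (ξ - Y ω)) ∂μ) ∧
      (StrictConvexOn ℝ Set.univ φ →
        (∫ ω, (φ (Y ω) - φ (∫ ω', Y ω' ∂μ) + φ' (∫ ω', Y ω' ∂μ) * ((∫ ω', Y ω' ∂μ) - Y ω)) ∂μ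
          = ∫ ω, (φ (Y ω) - φ ξ + φ' ξ * (ξ - Y ω)) ∂μ) →
        ξ = ∫ ω, Y ω ∂μ) :=
  bregman_loss_consistent_for_mean_general μ Y hYint φ φ' hsub hφint ξ
end

section
/- Let g: ℝ → ℝ be nondecreasing and define the generalized piecewise linear loss ρ(y,ξ) = (1{y ≤ ξ} - α)(g(ξ) - g(y)) for α ∈ (0,1). If Y is a random variable with E[|g(Y)|] < ∞ and q is a lower α-quantile of Y, then E[ρ(Y,q)] ≤ E[ρ(Y,ξ)] for all ξ ∈ ℝ. -/
/-!
Fix `ξ` and compare losses pointwise. For `q ≤ ξ`, monotonicity of `g` gives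
`ρ(y, ξ) - ρ(y, q) ≥ (g ξ - g q) (1{y ≤ q} - α)`, and for `ξ < q` the same bound with `1{y < q}`
(at `y = q` the loss `ρ(y, q)` vanishes). Taking expectations, the right-hand side becomes
`(g ξ - g q) (P(Y ≤ q) - α)`, resp. `(g ξ - g q) (P(Y < q) - α)`, and the quantile inequalities make
both factors have the same sign.
-/

open MeasureTheory

noncomputable def gplLoss (α : ℝ) (g : ℝ → ℝ) (y ξ : ℝ) : ℝ :=
  ((if y ≤ ξ then (1 : ℝ) else 0) - α) * (g ξ - g y)

section Pointwise

variable {α : ℝ} {g : ℝ → ℝ} {q ξ : ℝ}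

theorem gplLoss_sub_ge_of_le (hg : Monotone g) (hqξ : q ≤ ξ) (y : ℝ) :
    (g ξ - g q) * ((Set.Iic q).indicator 1 y - α) ≤ gplLoss α g y ξ - gplLoss α g y q := by
  simp only [gplLoss, Set.indicator_apply, Set.mem_Iic, Pi.one_apply]
  by_cases hyξ : y ≤ ξ
  · have := hg hyξ
    split_ifs <;> linarith
  · rw [if_neg fun hyq => hyξ (hyq.trans hqξ), if_neg hyξ]
    linarith

theorem gplLoss_sub_ge_of_lt (hg : Monotone g) (hξq : ξ < q) (y : ℝ) :
    (g ξ - g q) * ((Set.Iio q).indicator 1 y - α) ≤ gplLoss α g y ξ - gplLoss α g y q := by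
  simp only [gplLoss, Set.indicator_apply, Set.mem_Iio, Pi.one_apply]
  rcases lt_trichotomy y q with hyq | rfl | hqy
  · rw [if_pos hyq, if_pos hyq.le]
    by_cases hyξ : y ≤ ξ
    · rw [if_pos hyξ]
      linarith
    · rw [if_neg hyξ]
      linarith [hg (le_of_not_ge hyξ)]
  · simp only [lt_irrefl, not_le.2 hξq, sub_self]
    linarith
  · rw [if_neg (not_le.2 hqy), if_neg hqy.not_gt, if_neg (not_le.2 (hξq.trans hqy))]
    linarith

end Pointwise

section Expectation

variable {Ω : Type*} [MeasurableSpace Ω] {μ : Measure Ω} {Y : Ω → ℝ} {g : ℝ → ℝ}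

theorem integrable_gplLoss [IsFiniteMeasure μ] (hY : Measurable Y)
    (hgint : Integrable (fun ω => g (Y ω)) μ) (α ξ : ℝ) :
    Integrable (fun ω => gplLoss α g (Y ω) ξ) μ := by
  refine ((integrable_const (g ξ)).sub hgint).bdd_mul (c := 1 + |α|) ?_ ?_
  · exact ((Measurable.ite (hY measurableSet_Iic) measurable_const
      measurable_const).sub measurable_const).aestronglyMeasurable
  · refine Filter.Eventually.of_forall fun ω => ?_
    rw [Real.norm_eq_abs]
    calc |(if Y ω ≤ ξ then (1 : ℝ) else 0) - α| ≤ |if Y ω ≤ ξ then (1 : ℝ) else 0| + |α| :=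
          abs_sub _ _
      _ ≤ 1 + |α| := by gcongr; split_ifs <;> norm_num

theorem integral_const_mul_indicator_sub [IsProbabilityMeasure μ] (hY : Measurable Y)
    {S : Set ℝ} (hS : MeasurableSet S) (c α : ℝ) :
    ∫ ω, c * (S.indicator 1 (Y ω) - α) ∂μ = c * (μ.real (Y ⁻¹' S) - α) := by
  have hind : Integrable (fun ω => S.indicator (1 : ℝ → ℝ) (Y ω)) μ :=
    (integrable_const (1 : ℝ)).indicator (hY hS)
  rw [integral_const_mul, integral_sub hind (integrable_const α), integral_const]
  simp only [← Set.indicator_comp_right, Pi.one_comp, integral_indicator_one (hY hS)]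
  simp

theorem integral_gplLoss_le_of_lower_bound [IsProbabilityMeasure μ] (hY : Measurable Y)
    (hgint : Integrable (fun ω => g (Y ω)) μ) {α q ξ : ℝ} {S : Set ℝ} (hS : MeasurableSet S)
    (hbound : ∀ y, (g ξ - g q) * (S.indicator 1 y - α) ≤ gplLoss α g y ξ - gplLoss α g y q)
    (hsign : 0 ≤ (g ξ - g q) * (μ.real (Y ⁻¹' S) - α)) :
    ∫ ω, gplLoss α g (Y ω) q ∂μ ≤ ∫ ω, gplLoss α g (Y ω) ξ ∂μ := by
  have hq := integrable_gplLoss (μ := μ) hY hgint α q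
  have hξ := integrable_gplLoss (μ := μ) hY hgint α ξ
  have hS' : Integrable (fun ω => (g ξ - g q) * (S.indicator 1 (Y ω) - α)) μ :=
    (((integrable_const (1 : ℝ)).indicator (hY hS)).sub (integrable_const α)).const_mul _
  have hmono : ∫ ω, (g ξ - g q) * (S.indicator 1 (Y ω) - α) ∂μ
      ≤ ∫ ω, (gplLoss α g (Y ω) ξ - gplLoss α g (Y ω) q) ∂μ :=
    integral_mono hS' (hξ.sub hq) fun ω => hbound (Y ω)
  rw [integral_const_mul_indicator_sub hY hS, integral_sub hξ hq] at hmono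
  linarith

end Expectation

theorem gpl_loss_consistent_for_quantile_general
    {Ω : Type*} [MeasurableSpace Ω] (μ : Measure Ω) [IsProbabilityMeasure μ]
    (Y : Ω → ℝ) (hY : Measurable Y)
    (g : ℝ → ℝ) (hg : Monotone g)
    (hgint : Integrable (fun ω => g (Y ω)) μ)
    (α : ℝ)
    (q : ℝ)
    (hq1 : (μ {ω | Y ω < q}).toReal ≤ α)
    (hq2 : α ≤ (μ {ω | Y ω ≤ q}).toReal)
    (ξ : ℝ) :
    ∫ ω, ((if Y ω ≤ q then (1 : ℝ) else 0) - α) * (g q - g (Y ω)) ∂μ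
      ≤ ∫ ω, ((if Y ω ≤ ξ then (1 : ℝ) else 0) - α) * (g ξ - g (Y ω)) ∂μ := by
  rcases le_or_gt q ξ with hqξ | hξq
  · exact integral_gplLoss_le_of_lower_bound hY hgint measurableSet_Iic
      (gplLoss_sub_ge_of_le hg hqξ) (mul_nonneg (sub_nonneg.2 (hg hqξ)) (sub_nonneg.2 hq2))
  · exact integral_gplLoss_le_of_lower_bound hY hgint measurableSet_Iio
      (gplLoss_sub_ge_of_lt hg hξq)
      (mul_nonneg_of_nonpos_of_nonpos (sub_nonpos.2 (hg hξq.le)) (sub_nonpos.2 hq1))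

/-- Generalized piecewise linear losses are consistent for the lower α-quantile. -/
theorem gpl_loss_consistent_for_quantile
    {Ω : Type*} [MeasurableSpace Ω] (μ : Measure Ω) [IsProbabilityMeasure μ]
    (Y : Ω → ℝ) (hY : Measurable Y)
    (g : ℝ → ℝ) (hg : Monotone g)
    (hgint : Integrable (fun ω => g (Y ω)) μ)
    (α : ℝ) (hα : α ∈ Set.Ioo (0 : ℝ) 1)
    (q : ℝ)
    (hq1 : (μ {ω | Y ω < q}).toReal ≤ α)
    (hq2 : α ≤ (μ {ω | Y ω ≤ q}).toReal)
    (ξ : ℝ) :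
    ∫ ω, ((if Y ω ≤ q then (1 : ℝ) else 0) - α) * (g q - g (Y ω)) ∂μ
      ≤ ∫ ω, ((if Y ω ≤ ξ then (1 : ℝ) else 0) - α) * (g ξ - g (Y ω)) ∂μ :=
  gpl_loss_consistent_for_quantile_general μ Y hY g hg hgint α q hq1 hq2 ξ
end
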